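/- Suppose the mechanism (Q, ū) is F-IC for some F ∈ 𝓘. Then θL < θL_F and θH_F < θH, and there exists ε > 0 such that I_F(θ) > 0 for all θ ∈ Θ with |θ − θL_F| < ε or |θ − θH_F| < ε. -/

import Mathlib

open MeasureTheory Set Filter

/-- A cumulative distribution function on `[θL, θH]`. -/
structure CDF (θL θH : ℝ) where
  toFun : ℝ → ℝ
  mono : Monotone toFun
  right_continuous : ∀ x, ContinuousWithinAt toFun (Set.Ici x) x
  eq_zero : ∀ x, x < θL → toFun x = 0
  eq_one : ∀ x, θH ≤ x → toFun x = 1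

namespace CDF

variable {θL θH : ℝ}

/-- The Stieltjes function associated with a CDF. -/
noncomputable def stieltjes (F : CDF θL θH) : StieltjesFunction ℝ :=
  ⟨F.toFun, F.mono, F.right_continuous⟩

/-- The Lebesgue–Stieltjes measure of a CDF. -/
noncomputable def meas (F : CDF θL θH) : Measure ℝ := F.stieltjes.measure

/-- The integral `∫ φ dF`. -/
noncomputable def integ (F : CDF θL θH) (φ : ℝ → ℝ) : ℝ := ∫ θ, φ θ ∂F.meas

/-- The support of the distribution with CDF `F`. -/
def supp (F : CDF θL θH) : Set ℝ :=
  {x | ∀ ε > 0, 0 < F.toFun (x + ε) - F.toFun (x - ε)}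

/-- The left limit `F₋`. -/
noncomputable def leftLim (F : CDF θL θH) (x : ℝ) : ℝ := Function.leftLim F.toFun x

/-- The mean `∫ θ dF(θ)`. -/
noncomputable def mean (F : CDF θL θH) : ℝ := F.integ (fun θ => θ)

end CDF

/-- `I_F(θ) = ∫_{θL}^{θ} (F₀(t) − F(t)) dt`. -/
noncomputable def IFun {θL θH : ℝ} (F₀ F : CDF θL θH) (θ : ℝ) : ℝ :=
  ∫ t in θL..θ, (F₀.toFun t - F.toFun t)

/-- `F ∈ 𝓘`: `F` is a feasible signal given the prior `F₀`. -/
def IsSignal {θL θH : ℝ} (F₀ F : CDF θL θH) : Prop :=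
  (∀ θ ∈ Set.Icc θL θH, 0 ≤ IFun F₀ F θ) ∧ IFun F₀ F θH = 0

/-- The prior's support contains both endpoints. -/
def IsPrior {θL θH : ℝ} (F₀ : CDF θL θH) : Prop :=
  θL ∈ F₀.supp ∧ θH ∈ F₀.supp

/-- Assumptions on the information-cost function `c` (with derivatives `c'`, `c''`). -/
structure CostAssumptions (θL θH θ₀ : ℝ) (c c' c'' : ℝ → ℝ) : Prop where
  cont : ContinuousOn c (Set.Icc θL θH)
  nonneg : ∀ θ ∈ Set.Icc θL θH, 0 ≤ c θ
  hasDeriv : ∀ θ ∈ Set.Ioo θL θH, HasDerivAt c (c' θ) θ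
  hasDeriv2 : ∀ θ ∈ Set.Ioo θL θH, HasDerivAt c' (c'' θ) θ
  cont2 : ContinuousOn c'' (Set.Ioo θL θH)
  pos2 : ∀ θ ∈ Set.Ioo θL θH, 0 < c'' θ
  minAt : ∀ θ ∈ Set.Icc θL θH, c θ₀ ≤ c θ
  slopeBot : Filter.Tendsto c' (nhdsWithin θL (Set.Ioi θL)) Filter.atBot
  slopeTop : Filter.Tendsto c' (nhdsWithin θH (Set.Iio θH)) Filter.atTop

/-- Assumptions on the production-cost function `κ` (with derivative `κ'`). -/
structure KappaAssumptions (θL θH qbar : ℝ) (κ κ' : ℝ → ℝ) : Prop where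
  hasDeriv : ∀ q ∈ Set.Icc (0:ℝ) qbar, HasDerivWithinAt κ (κ' q) (Set.Icc 0 qbar) q
  contDeriv : ContinuousOn κ' (Set.Icc 0 qbar)
  strictMono : StrictMonoOn κ (Set.Icc 0 qbar)
  strictConvex : StrictConvexOn ℝ (Set.Icc 0 qbar) κ
  zero : κ 0 = 0
  nonneg : ∀ q ∈ Set.Icc (0:ℝ) qbar, 0 ≤ κ q
  derivZero : κ' 0 ≤ θL
  derivTop : θH < κ' qbar

/-- An allocation: a nondecreasing map from types into `[0, q̄]`. -/
def IsAllocation (θL θH qbar : ℝ) (Q : ℝ → ℝ) : Prop :=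
  MonotoneOn Q (Set.Icc θL θH) ∧ ∀ θ ∈ Set.Icc θL θH, Q θ ∈ Set.Icc 0 qbar

/-- The buyer's value `V_{Q,ū}(θ) = ū + ∫_{θL}^{θ} Q(t) dt`. -/
noncomputable def Vfun (θL : ℝ) (Q : ℝ → ℝ) (u θ : ℝ) : ℝ :=
  u + ∫ t in θL..θ, Q t

/-- The mechanism `(Q, ū)` is `F`-incentive compatible. -/
def IsIC {θL θH : ℝ} (F₀ : CDF θL θH) (c : ℝ → ℝ) (Q : ℝ → ℝ) (u : ℝ)
    (F : CDF θL θH) : Prop :=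
  IsSignal F₀ F ∧
  ∀ F' : CDF θL θH, IsSignal F₀ F' →
    F'.integ (fun θ => Vfun θL Q u θ - c θ) ≤ F.integ (fun θ => Vfun θL Q u θ - c θ)

/-- The monopolist's per-report profit `π_{Q,ū}(θ)`. -/
noncomputable def profit (θL : ℝ) (κ Q : ℝ → ℝ) (u θ : ℝ) : ℝ :=
  θ * Q θ - Vfun θL Q u θ - κ (Q θ)

/-- `(Q, F)` is monopolist-optimal. -/
def MonopolistOptimal {θL θH : ℝ} (qbar : ℝ) (F₀ : CDF θL θH) (c κ : ℝ → ℝ)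
    (Q : ℝ → ℝ) (F : CDF θL θH) : Prop :=
  IsAllocation θL θH qbar Q ∧ IsIC F₀ c Q 0 F ∧
  ∀ (Q' : ℝ → ℝ) (u' : ℝ) (F' : CDF θL θH),
    IsAllocation θL θH qbar Q' → 0 ≤ u' → IsIC F₀ c Q' u' F' →
    F'.integ (profit θL κ Q' u') ≤ F.integ (profit θL κ Q 0)

/-- `P` is an `F`-shadow price. -/
def IsShadowPrice {θL θH : ℝ} (F₀ F : CDF θL θH) (P : ℝ → ℝ) : Prop :=
  (∃ K : NNReal, LipschitzOnWith K P (Set.Icc θL θH)) ∧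
  ConvexOn ℝ (Set.Icc θL θH) P ∧
  ∀ a b : ℝ, Set.Ioo a b ⊆ {θ | θ ∈ Set.Icc θL θH ∧ 0 < IFun F₀ F θ} →
    ∃ m k : ℝ, ∀ θ ∈ Set.Ioo a b, P θ = m * θ + k

/-- `P` is an `F`-shadow price for `φ`. -/
def IsShadowPriceFor {θL θH : ℝ} (F₀ F : CDF θL θH) (φ P : ℝ → ℝ) : Prop :=
  IsShadowPrice F₀ F P ∧ (∀ θ ∈ Set.Icc θL θH, φ θ ≤ P θ) ∧
  ∀ θ ∈ F.supp, P θ = φ θ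

/-- `θL_F`, the minimum of the support of `F`. -/
noncomputable def thetaLF {θL θH : ℝ} (F : CDF θL θH) : ℝ := sInf F.supp

/-- `θH_F`, the maximum of the support of `F`. -/
noncomputable def thetaHF {θL θH : ℝ} (F : CDF θL θH) : ℝ := sSup F.supp

/-- `p` is an `F`-shadow derivative. -/
def IsShadowDeriv {θL θH : ℝ} (qbar : ℝ) (F₀ : CDF θL θH) (c' : ℝ → ℝ)
    (F : CDF θL θH) (p : ℝ → ℝ) : Prop :=
  (∃ M : ℝ, ∀ θ ∈ Set.Icc θL θH, |p θ| ≤ M) ∧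
  MonotoneOn p (Set.Icc θL θH) ∧
  (∀ a b : ℝ, Set.Ioo a b ⊆ {θ | θ ∈ Set.Icc θL θH ∧ 0 < IFun F₀ F θ} →
    ∀ x ∈ Set.Ioo a b, ∀ y ∈ Set.Ioo a b, p x = p y) ∧
  -c' (thetaLF F) ≤ p (thetaLF F) ∧
  p (thetaHF F) ≤ qbar - c' (thetaHF F)

/-- The allocation `Q^p` induced by a shadow derivative `p`. -/
noncomputable def inducedAlloc {θL θH : ℝ} (qbar : ℝ) (c' : ℝ → ℝ)
    (F : CDF θL θH) (p : ℝ → ℝ) (θ : ℝ) : ℝ :=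
  if θ < thetaLF F then max (p (thetaLF F) + c' θ) 0
  else if θ ≤ thetaHF F then p θ + c' θ
  else min (p (thetaHF F) + c' θ) qbar

/-- `Q` is `F`-information-cost-canceling. -/
def IsICC {θL θH : ℝ} (qbar : ℝ) (F₀ : CDF θL θH) (c' : ℝ → ℝ)
    (F : CDF θL θH) (Q : ℝ → ℝ) : Prop :=
  ∃ p : ℝ → ℝ, IsShadowDeriv qbar F₀ c' F p ∧
    ∀ θ ∈ Set.Icc θL θH, Q θ = inducedAlloc qbar c' F p θ

/-- `φ` satisfies edge irrelevance: some maximizer over CDFs with the prior mean has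
support in the open interval. -/
def EdgeIrrelevant {θL θH : ℝ} (F₀ : CDF θL θH) (φ : ℝ → ℝ) : Prop :=
  ∃ F' : CDF θL θH, F'.mean = F₀.mean ∧
    (∀ G : CDF θL θH, G.mean = F₀.mean → G.integ φ ≤ F'.integ φ) ∧
    F'.supp ⊆ Set.Ioo θL θH

/-- `θH_Q = inf {θ : Q(θ) = Q(θH)}`. -/
noncomputable def thetaHQ (θL θH : ℝ) (Q : ℝ → ℝ) : ℝ :=
  sInf {θ | θ ∈ Set.Icc θL θH ∧ Q θ = Q θH}

/-- `θL_Q = sup {θ : Q(θ) = Q(θL)}`. -/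
noncomputable def thetaLQ (θL θH : ℝ) (Q : ℝ → ℝ) : ℝ :=
  sSup {θ | θ ∈ Set.Icc θL θH ∧ Q θ = Q θL}

/-- The support of a (cumulative distribution) function `G : ℝ → ℝ`. -/
def suppOfFun (G : ℝ → ℝ) : Set ℝ := {x | ∀ ε > 0, 0 < G (x + ε) - G (x - ε)}

/-- The conditional CDF `F(·|θ ∈ [a, b])`. -/
noncomputable def condFun {θL θH : ℝ} (F : CDF θL θH) (a b θ : ℝ) : ℝ :=
  if θ < a then 0
  else (F.toFun (min θ b) - F.leftLim a) / (F.toFun b - F.leftLim a)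

/-! If the support of `F` reached down to `θL`, the buyer could move the mass of `F` below some
`p` close to `θL` up to `p` and the mass above some `y` down to `y`, with `y` chosen so that the
mean is unchanged. The result is again a signal: its integrated CDF `∫_{θL}^θ F = E (θ - X)⁺`
only decreases, and is unchanged at `θH`. Moving a posterior from `θ` up to `p` loses no value and
saves at least `-c'(p) (p - θ)` of information cost; moving it from `θ` down to `y` loses at most
`q̄ (θ - y)` of value and saves at least `c'(y) (θ - y)`. As `c'(p) → -∞` while `y` stays away
from `θH`, the deviation is profitable, contradicting incentive compatibility. The upper end is
symmetric. Finally `I_F` is `1`-Lipschitz and positive at `θL_F` and at `θH_F`, since `F`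
vanishes below `θL_F` and equals `1` above `θH_F` while `F₀` does neither. -/

open Topology ProbabilityTheory

lemma lintegral_ofReal_sub_eq_setLIntegral (μ : Measure ℝ) [SFinite μ] (x : ℝ) :
    ∫⁻ s, ENNReal.ofReal (x - s) ∂μ = ∫⁻ t in Iio x, μ (Iic t) := by
  have hS : MeasurableSet {z : ℝ × ℝ | z.1 ≤ z.2 ∧ z.2 < x} :=
    (measurableSet_le measurable_fst measurable_snd).inter (measurable_snd measurableSet_Iio)
  calc ∫⁻ s, ENNReal.ofReal (x - s) ∂μ = μ.prod volume {z : ℝ × ℝ | z.1 ≤ z.2 ∧ z.2 < x} := by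
        rw [Measure.prod_apply hS]
        congr with s
        rw [← Real.volume_Ico]
        rfl
    _ = ∫⁻ t, (Iio x).indicator (fun t => μ (Iic t)) t := by
        rw [Measure.prod_apply_symm hS]
        congr with t
        by_cases ht : t < x <;> simp [ht, Iic, indicator]
    _ = ∫⁻ t in Iio x, μ (Iic t) := lintegral_indicator measurableSet_Iio _

namespace CDF

variable {θL θH : ℝ}

lemma left_le_right (F : CDF θL θH) : θL ≤ θH := by
  by_contra h
  have := F.eq_zero θH (not_le.1 h)
  rw [F.eq_one θH le_rfl] at this
  norm_num at this

variable (F : CDF θL θH)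

lemma toFun_nonneg (x : ℝ) : 0 ≤ F.toFun x := by
  rcases lt_or_ge x θL with h | h
  · exact (F.eq_zero x h).ge
  · exact (F.eq_zero (θL - 1) (by linarith)).symm.le.trans (F.mono (by linarith))

lemma toFun_le_one (x : ℝ) : F.toFun x ≤ 1 := by
  rcases le_or_gt θH x with h | h
  · exact (F.eq_one x h).le
  · exact (F.mono h.le).trans (F.eq_one θH le_rfl).le

lemma tendsto_atBot : Tendsto F.toFun atBot (𝓝 0) :=
  tendsto_const_nhds.congr' <| (eventually_lt_atBot θL).mono fun x hx => (F.eq_zero x hx).symm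

lemma tendsto_atTop : Tendsto F.toFun atTop (𝓝 1) :=
  tendsto_const_nhds.congr' <| (eventually_ge_atTop θH).mono fun x hx => (F.eq_one x hx).symm

instance : IsProbabilityMeasure F.meas :=
  ⟨by rw [meas, F.stieltjes.measure_univ F.tendsto_atBot F.tendsto_atTop, sub_zero,
    ENNReal.ofReal_one]⟩

lemma meas_Iic (x : ℝ) : F.meas (Iic x) = ENNReal.ofReal (F.toFun x) := by
  rw [meas, F.stieltjes.measure_Iic F.tendsto_atBot, sub_zero]
  rfl

lemma ae_mem_Icc : ∀ᵐ s ∂F.meas, s ∈ Icc θL θH := by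
  have hL : F.meas (Iio θL) = 0 := by
    have : Function.leftLim F.toFun θL = 0 := leftLim_eq_of_tendsto <| tendsto_const_nhds.congr' <|
      eventually_nhdsWithin_of_forall fun t ht => (F.eq_zero t ht).symm
    rw [meas, F.stieltjes.measure_Iio F.tendsto_atBot, sub_zero]
    exact ENNReal.ofReal_eq_zero.2 this.le
  have hH : F.meas (Ioi θH) = 0 := by
    rw [meas, F.stieltjes.measure_Ioi F.tendsto_atTop, ENNReal.ofReal_eq_zero, sub_nonpos]
    exact (F.eq_one θH le_rfl).ge
  refine ae_iff.2 (measure_mono_null (fun s hs => ?_) (measure_union_null hL hH))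
  rcases lt_or_ge s θL with h | h
  · exact Or.inl h
  · exact Or.inr (not_le.1 fun h' => hs ⟨h, h'⟩)

lemma integrable_of_continuousOn {φ : ℝ → ℝ} (hφ : ContinuousOn φ (Icc θL θH)) :
    Integrable φ F.meas := by
  rw [← Measure.restrict_eq_self_of_ae_mem F.ae_mem_Icc]
  exact hφ.integrableOn_compact isCompact_Icc

lemma integrable_of_continuous {φ : ℝ → ℝ} (hφ : Continuous φ) : Integrable φ F.meas :=
  F.integrable_of_continuousOn hφ.continuousOn

lemma intervalIntegrable (a b : ℝ) : IntervalIntegrable F.toFun volume a b :=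
  F.mono.intervalIntegrable

noncomputable def ofMeasure (μ : Measure ℝ) [IsProbabilityMeasure μ]
    (hμ : ∀ᵐ s ∂μ, s ∈ Icc θL θH) : CDF θL θH where
  toFun := cdf μ
  mono := (cdf μ).mono
  right_continuous := (cdf μ).right_continuous
  eq_zero x hx := by
    rw [cdf_eq_real, measureReal_eq_zero_iff]
    exact measure_mono_null (fun s (hs : s ≤ x) (hmem : s ∈ Icc θL θH) =>
      (hs.trans_lt hx).not_ge hmem.1) (ae_iff.1 hμ)
  eq_one x hx := by
    rw [cdf_eq_real, measureReal_def, (prob_compl_eq_zero_iff measurableSet_Iic).1,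
      ENNReal.toReal_one]
    exact measure_mono_null (fun s (hs : ¬ s ≤ x) (hmem : s ∈ Icc θL θH) =>
      hs (hmem.2.trans hx)) (ae_iff.1 hμ)

lemma meas_ofMeasure (μ : Measure ℝ) [IsProbabilityMeasure μ] (hμ : ∀ᵐ s ∂μ, s ∈ Icc θL θH) :
    (ofMeasure μ hμ).meas = μ :=
  measure_cdf μ

lemma supp_subset_Icc : F.supp ⊆ Icc θL θH := by
  intro x hx
  by_contra h
  rcases lt_or_ge x θL with hL | hL
  · have := hx ((θL - x) / 2) (by linarith)
    rw [F.eq_zero _ (by linarith), F.eq_zero _ (by linarith)] at this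
    linarith
  · have hH : θH < x := lt_of_not_ge fun hH => h ⟨hL, hH⟩
    have := hx ((x - θH) / 2) (by linarith)
    rw [F.eq_one _ (by linarith), F.eq_one _ (by linarith)] at this
    linarith

lemma bddBelow_setOf_pos : BddBelow {s | 0 < F.toFun s} :=
  ⟨θL, fun s (hs : 0 < F.toFun s) => not_lt.1 fun h => hs.ne' (F.eq_zero s h)⟩

lemma bddAbove_setOf_lt_one : BddAbove {s | F.toFun s < 1} :=
  ⟨θH, fun s (hs : F.toFun s < 1) => not_lt.1 fun h => hs.ne (F.eq_one s h.le)⟩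

lemma sInf_pos_mem_supp : sInf {s | 0 < F.toFun s} ∈ F.supp := by
  intro ε hε
  have hne : {s | 0 < F.toFun s}.Nonempty := ⟨θH, by simp [F.eq_one θH le_rfl]⟩
  obtain ⟨s, hs, hsε⟩ := Real.lt_sInf_add_pos hne hε
  have hbelow : F.toFun (sInf {s | 0 < F.toFun s} - ε) = 0 :=
    (F.toFun_nonneg _).antisymm' <| not_lt.1 fun h =>
      (csInf_le F.bddBelow_setOf_pos h).not_gt (sub_lt_self _ hε)
  rw [hbelow, sub_zero]
  exact hs.trans_le (F.mono hsε.le)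

lemma sSup_lt_one_mem_supp : sSup {s | F.toFun s < 1} ∈ F.supp := by
  intro ε hε
  have hne : {s | F.toFun s < 1}.Nonempty := ⟨θL - 1, by simp [F.eq_zero (θL - 1) (by linarith)]⟩
  obtain ⟨s, hs, hsε⟩ := Real.add_neg_lt_sSup hne (neg_lt_zero.2 hε)
  have habove : F.toFun (sSup {s | F.toFun s < 1} + ε) = 1 :=
    (F.toFun_le_one _).antisymm <| not_lt.1 fun h =>
      (le_csSup F.bddAbove_setOf_lt_one h).not_gt (lt_add_of_pos_right _ hε)
  rw [habove]
  exact sub_pos.2 ((F.mono (by linarith)).trans_lt hs)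

lemma bddBelow_supp : BddBelow F.supp := ⟨θL, fun _ hx => (F.supp_subset_Icc hx).1⟩

lemma bddAbove_supp : BddAbove F.supp := ⟨θH, fun _ hx => (F.supp_subset_Icc hx).2⟩

lemma toFun_eq_zero_of_lt_thetaLF {t : ℝ} (ht : t < thetaLF F) : F.toFun t = 0 := by
  refine (F.toFun_nonneg t).antisymm' (not_lt.1 fun hpos => ?_)
  exact ((csInf_le F.bddBelow_supp F.sInf_pos_mem_supp).trans
    (csInf_le F.bddBelow_setOf_pos hpos)).not_gt ht

lemma toFun_eq_one_of_thetaHF_lt {t : ℝ} (ht : thetaHF F < t) : F.toFun t = 1 := by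
  refine (F.toFun_le_one t).antisymm (not_lt.1 fun hlt => ?_)
  exact ((le_csSup F.bddAbove_setOf_lt_one hlt).trans
    (le_csSup F.bddAbove_supp F.sSup_lt_one_mem_supp)).not_gt ht

lemma toFun_pos_of_thetaLF_lt {t : ℝ} (ht : thetaLF F < t) : 0 < F.toFun t := by
  obtain ⟨x, hx, hxt⟩ := exists_lt_of_csInf_lt ⟨_, F.sInf_pos_mem_supp⟩ ht
  have := hx (t - x) (sub_pos.2 hxt)
  rw [add_sub_cancel] at this
  linarith [F.toFun_nonneg (x - (t - x))]

lemma toFun_lt_one_of_lt_thetaHF {t : ℝ} (ht : t < thetaHF F) : F.toFun t < 1 := by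
  obtain ⟨x, hx, htx⟩ := exists_lt_of_lt_csSup ⟨_, F.sSup_lt_one_mem_supp⟩ ht
  have := hx (x - t) (sub_pos.2 htx)
  rw [sub_sub_cancel] at this
  linarith [F.toFun_le_one (x + (x - t))]

noncomputable def shortfall (x : ℝ) : ℝ := F.integ fun s => max (x - s) 0

noncomputable def excess (x : ℝ) : ℝ := F.integ fun s => max (s - x) 0

lemma shortfall_eq_intervalIntegral {x : ℝ} (hx : θL ≤ x) :
    F.shortfall x = ∫ t in θL..x, F.toFun t := by
  have hzero : ∫⁻ t in Iio θL, ENNReal.ofReal (F.toFun t) = 0 := by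
    rw [setLIntegral_congr_fun measurableSet_Iio (g := 0) fun t ht => by simp [F.eq_zero t ht]]
    exact lintegral_zero
  have key : ∫⁻ s, ENNReal.ofReal (x - s) ∂F.meas =
      ∫⁻ t in Ioc θL x, ENNReal.ofReal (F.toFun t) := by
    rw [lintegral_ofReal_sub_eq_setLIntegral, ← Iio_union_Ico_eq_Iio hx,
      lintegral_union measurableSet_Ico ((Iio_disjoint_Ici le_rfl).mono_right Ico_subset_Ici_self),
      setLIntegral_congr_fun measurableSet_Iio fun t _ => F.meas_Iic t, hzero, zero_add]
    exact setLIntegral_congr_fun measurableSet_Ico (fun t _ => F.meas_Iic t) |>.trans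
      (setLIntegral_congr Ico_ae_eq_Ioc)
  have hL : ∫ s, max (x - s) 0 ∂F.meas = (∫⁻ s, ENNReal.ofReal (max (x - s) 0) ∂F.meas).toReal :=
    integral_eq_lintegral_of_nonneg_ae (Eventually.of_forall fun s => le_max_right (x - s) 0)
      (by fun_prop : Continuous fun s => max (x - s) 0).aestronglyMeasurable
  have hR : ∫ t in Ioc θL x, F.toFun t =
      (∫⁻ t in Ioc θL x, ENNReal.ofReal (F.toFun t)).toReal :=
    integral_eq_lintegral_of_nonneg_ae (Eventually.of_forall F.toFun_nonneg)
      F.mono.measurable.aestronglyMeasurable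
  rw [shortfall, integ, hL, intervalIntegral.integral_of_le hx, hR, ← key]
  simp

lemma shortfall_nonneg (x : ℝ) : 0 ≤ F.shortfall x :=
  integral_nonneg fun _ => le_max_right _ _

lemma excess_nonneg (x : ℝ) : 0 ≤ F.excess x :=
  integral_nonneg fun _ => le_max_right _ _

lemma excess_eq_shortfall_add (x : ℝ) : F.excess x = F.shortfall x + (F.mean - x) := by
  have hid : ∀ s : ℝ, max (s - x) 0 = max (x - s) 0 + (s - x) := fun s => by
    rcases le_total s x with h | h <;> simp [h, sub_nonneg.2, sub_nonpos.2]
  rw [excess, shortfall, mean, integ, integ, integ]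
  simp_rw [hid]
  rw [integral_add (F.integrable_of_continuous (by fun_prop))
    (F.integrable_of_continuous (by fun_prop)),
    integral_sub (F.integrable_of_continuous (by fun_prop)) (integrable_const x)]
  simp

lemma integral_sub_eq_sub_mean (x : ℝ) : ∫ s, (x - s) ∂F.meas = x - F.mean := by
  rw [integral_sub (integrable_const x) (F.integrable_of_continuous continuous_id'), mean, integ]
  simp

lemma shortfall_eq_sub_mean_of_ae_le {x : ℝ} (h : ∀ᵐ s ∂F.meas, s ≤ x) :
    F.shortfall x = x - F.mean := by
  rw [shortfall, integ, integral_congr_ae (h.mono fun s hs => max_eq_left (sub_nonneg.2 hs)),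
    integral_sub_eq_sub_mean]

lemma shortfall_eq_sub_mean {x : ℝ} (hx : θH ≤ x) : F.shortfall x = x - F.mean :=
  F.shortfall_eq_sub_mean_of_ae_le (F.ae_mem_Icc.mono fun _ hs => hs.2.trans hx)

lemma sub_mean_le_shortfall (x : ℝ) : x - F.mean ≤ F.shortfall x := by
  rw [← integral_sub_eq_sub_mean]
  exact integral_mono (F.integrable_of_continuous (by fun_prop))
    (F.integrable_of_continuous (by fun_prop)) fun s => le_max_left _ _

lemma continuousOn_shortfall : ContinuousOn F.shortfall (Ici θL) :=
  (intervalIntegral.continuous_primitive F.intervalIntegrable θL).continuousOn.congr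
    fun _ hx => F.shortfall_eq_intervalIntegral hx

lemma continuousOn_excess : ContinuousOn F.excess (Ici θL) :=
  ((F.continuousOn_shortfall.add (continuousOn_const.sub continuousOn_id))).congr
    fun x _ => F.excess_eq_shortfall_add x

lemma shortfall_le {x : ℝ} (hx : θL ≤ x) : F.shortfall x ≤ x - θL := by
  rw [F.shortfall_eq_intervalIntegral hx]
  simpa using intervalIntegral.integral_mono_on hx (F.intervalIntegrable θL x)
    intervalIntegrable_const fun t _ => F.toFun_le_one t

lemma excess_eq_intervalIntegral {x : ℝ} (hx : θL ≤ x) :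
    F.excess x = ∫ t in x..θH, (1 - F.toFun t) := by
  have hsplit := intervalIntegral.integral_add_adjacent_intervals (F.intervalIntegrable θL x)
    (F.intervalIntegrable x θH)
  have hmean := F.shortfall_eq_sub_mean le_rfl
  rw [F.shortfall_eq_intervalIntegral F.left_le_right] at hmean
  rw [F.excess_eq_shortfall_add, F.shortfall_eq_intervalIntegral hx,
    intervalIntegral.integral_sub intervalIntegrable_const (F.intervalIntegrable x θH),
    intervalIntegral.integral_const, smul_eq_mul, mul_one]
  linarith

lemma shortfall_left : F.shortfall θL = 0 := by
  rw [F.shortfall_eq_intervalIntegral le_rfl, intervalIntegral.integral_same]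

lemma excess_right : F.excess θH = 0 := by
  rw [F.excess_eq_shortfall_add, F.shortfall_eq_sub_mean le_rfl, sub_add_sub_cancel, sub_self]

lemma left_le_mean : θL ≤ F.mean := by
  have := F.excess_nonneg θL
  rw [F.excess_eq_shortfall_add, F.shortfall_left] at this
  linarith

lemma mean_le_right : F.mean ≤ θH := by
  have := F.shortfall_nonneg θH
  rw [F.shortfall_eq_sub_mean le_rfl] at this
  linarith

lemma excess_le {x : ℝ} (hx : x ≤ θH) : F.excess x ≤ θH - x := by
  have h := integral_mono_ae
    (F.integrable_of_continuous (by fun_prop : Continuous fun s => max (s - x) 0))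
    (integrable_const (θH - x)) <| F.ae_mem_Icc.mono fun s hs =>
      max_le (by linarith [hs.2]) (sub_nonneg.2 hx)
  simpa [excess, integ] using h

lemma shortfall_pos {x : ℝ} (hx : θL < x) (hF : ∀ t ∈ Ioo θL x, 0 < F.toFun t) :
    0 < F.shortfall x := by
  rw [F.shortfall_eq_intervalIntegral hx.le]
  exact intervalIntegral.intervalIntegral_pos_of_pos_on (F.intervalIntegrable θL x) hF hx

lemma excess_pos {x : ℝ} (hLx : θL ≤ x) (hx : x < θH) (hF : ∀ t ∈ Ioo x θH, F.toFun t < 1) :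
    0 < F.excess x := by
  rw [F.excess_eq_intervalIntegral hLx]
  exact intervalIntegral.intervalIntegral_pos_of_pos_on
    (intervalIntegrable_const.sub (F.intervalIntegrable x θH)) (fun t ht => sub_pos.2 (hF t ht)) hx

lemma exists_excess_eq_shortfall {p : ℝ} (hp : θL ≤ p) (hpm : p < F.mean)
    (hpos : 0 < F.shortfall p) :
    ∃ y ∈ Ioo p θH, F.excess y = F.shortfall p ∧ F.mean - F.shortfall p ≤ y := by
  obtain ⟨y, ⟨hpy, hyH⟩, hy⟩ := intermediate_value_Icc' (hpm.le.trans F.mean_le_right)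
    (F.continuousOn_excess.mono fun x hx => hp.trans hx.1)
    ⟨F.excess_right.symm ▸ hpos.le, by rw [F.excess_eq_shortfall_add]; linarith⟩
  refine ⟨y, ⟨hpy.lt_of_ne ?_, hyH.lt_of_ne ?_⟩, hy, ?_⟩
  · rintro rfl
    rw [F.excess_eq_shortfall_add] at hy
    linarith
  · rintro rfl
    rw [F.excess_right] at hy
    linarith
  · have := F.excess_eq_shortfall_add y
    linarith [F.shortfall_nonneg y]

lemma exists_shortfall_eq_excess {y : ℝ} (hmy : F.mean < y) (hpos : 0 < F.excess y) :
    ∃ p ∈ Ioo θL y, F.shortfall p = F.excess y ∧ p ≤ F.mean + F.excess y := by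
  have hLy : θL ≤ y := F.left_le_mean.trans hmy.le
  obtain ⟨p, ⟨hLp, hpy⟩, hp⟩ := intermediate_value_Icc hLy
    (F.continuousOn_shortfall.mono fun x hx => hx.1)
    ⟨F.shortfall_left.symm ▸ hpos.le, by have := F.excess_eq_shortfall_add y; linarith⟩
  refine ⟨p, ⟨hLp.lt_of_ne ?_, hpy.lt_of_ne ?_⟩, hp, ?_⟩
  · rintro rfl
    rw [F.shortfall_left] at hp
    linarith
  · rintro rfl
    have := F.excess_eq_shortfall_add p
    linarith
  · have := F.excess_eq_shortfall_add p
    linarith [F.excess_nonneg p]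

variable {p y : ℝ} (hp : θL ≤ p) (hpy : p ≤ y) (hy : y ≤ θH)

noncomputable def truncate : CDF θL θH :=
  haveI := Measure.isProbabilityMeasure_map (μ := F.meas) (f := fun s => max p (min s y))
    (by fun_prop)
  ofMeasure (F.meas.map fun s => max p (min s y)) <|
    (ae_map_iff (by fun_prop) measurableSet_Icc).2 <| ae_of_all _ fun _ =>
      ⟨hp.trans (le_max_left _ _), max_le (hpy.trans hy) ((min_le_right _ _).trans hy)⟩

lemma meas_truncate : (F.truncate hp hpy hy).meas = F.meas.map fun s => max p (min s y) :=
  haveI := Measure.isProbabilityMeasure_map (μ := F.meas) (f := fun s => max p (min s y))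
    (by fun_prop)
  meas_ofMeasure _ _

lemma integ_truncate {φ : ℝ → ℝ} (hφ : ContinuousOn φ (Icc θL θH)) :
    (F.truncate hp hpy hy).integ φ = ∫ s, φ (max p (min s y)) ∂F.meas := by
  have hφm := ((F.truncate hp hpy hy).integrable_of_continuousOn hφ).aestronglyMeasurable
  rw [meas_truncate] at hφm
  rw [integ, meas_truncate, integral_map (by fun_prop) hφm]

lemma mean_truncate : (F.truncate hp hpy hy).mean = F.mean + F.shortfall p - F.excess y := by
  have hid : ∀ s, max p (min s y) = s + max (p - s) 0 - max (s - y) 0 := fun s => by grind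
  rw [mean, integ_truncate _ _ _ _ (φ := fun s => s) continuousOn_id]
  simp_rw [hid]
  rw [integral_sub (F.integrable_of_continuous (by fun_prop))
      (F.integrable_of_continuous (by fun_prop)),
    integral_add (F.integrable_of_continuous (by fun_prop))
      (F.integrable_of_continuous (by fun_prop))]
  rfl

lemma shortfall_truncate_le (hbal : F.shortfall p = F.excess y) (x : ℝ) :
    (F.truncate hp hpy hy).shortfall x ≤ F.shortfall x := by
  rcases le_total x y with hxy | hyx
  · rw [shortfall,
      integ_truncate _ _ _ _ (by fun_prop : Continuous fun s => max (x - s) 0).continuousOn]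
    exact integral_mono (F.integrable_of_continuous (by fun_prop))
      (F.integrable_of_continuous (by fun_prop)) fun s => by grind
  · have hle : ∀ᵐ s ∂(F.truncate hp hpy hy).meas, s ≤ x := by
      rw [meas_truncate]
      exact (ae_map_iff (by fun_prop) measurableSet_Iic).2 <|
        ae_of_all _ fun _ => max_le (hpy.trans hyx) ((min_le_right _ _).trans hyx)
    rw [shortfall_eq_sub_mean_of_ae_le _ hle, mean_truncate, hbal, add_sub_cancel_right]
    exact F.sub_mean_le_shortfall x

end CDF

section

variable {θL θH : ℝ} {F₀ F : CDF θL θH}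

lemma IFun_eq_shortfall_sub {x : ℝ} (hx : θL ≤ x) :
    IFun F₀ F x = F₀.shortfall x - F.shortfall x := by
  rw [IFun, intervalIntegral.integral_sub (F₀.intervalIntegrable _ _) (F.intervalIntegrable _ _),
    F₀.shortfall_eq_intervalIntegral hx, F.shortfall_eq_intervalIntegral hx]

lemma isSignal_iff : IsSignal F₀ F ↔
    (∀ x ∈ Icc θL θH, F.shortfall x ≤ F₀.shortfall x) ∧ F.shortfall θH = F₀.shortfall θH := by
  rw [IsSignal, IFun_eq_shortfall_sub F.left_le_right, sub_eq_zero, eq_comm]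
  refine and_congr (forall₂_congr fun x hx => ?_) Iff.rfl
  rw [IFun_eq_shortfall_sub hx.1, sub_nonneg]

lemma IsSignal.mean_eq (hsig : IsSignal F₀ F) : F.mean = F₀.mean := by
  have h := (isSignal_iff.1 hsig).2
  rw [F.shortfall_eq_sub_mean le_rfl, F₀.shortfall_eq_sub_mean le_rfl] at h
  linarith

lemma IsSignal.truncate (hsig : IsSignal F₀ F) {p y : ℝ} (hp : θL ≤ p) (hpy : p ≤ y)
    (hy : y ≤ θH) (hbal : F.shortfall p = F.excess y) : IsSignal F₀ (F.truncate hp hpy hy) := by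
  rw [isSignal_iff] at hsig ⊢
  refine ⟨fun x hx => (F.shortfall_truncate_le hp hpy hy hbal x).trans (hsig.1 x hx), ?_⟩
  rw [← hsig.2, CDF.shortfall_eq_sub_mean _ le_rfl, CDF.shortfall_eq_sub_mean _ le_rfl,
    CDF.mean_truncate, hbal, add_sub_cancel_right]

lemma IFun_sub_IFun (F₀ F : CDF θL θH) (a b : ℝ) :
    IFun F₀ F b - IFun F₀ F a = ∫ t in a..b, (F₀.toFun t - F.toFun t) := by
  have hint : ∀ a b, IntervalIntegrable (fun t => F₀.toFun t - F.toFun t) volume a b :=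
    fun a b => (F₀.intervalIntegrable a b).sub (F.intervalIntegrable a b)
  rw [IFun, IFun, ← intervalIntegral.integral_add_adjacent_intervals (hint θL a) (hint a b),
    add_sub_cancel_left]

lemma IFun_pos_of_abs_sub_lt (F₀ F : CDF θL θH) {a θ : ℝ} (h : |θ - a| < IFun F₀ F a) :
    0 < IFun F₀ F θ := by
  have hbound : ‖∫ t in a..θ, (F₀.toFun t - F.toFun t)‖ ≤ 1 * |θ - a| :=
    intervalIntegral.norm_integral_le_of_norm_le_const fun t _ => by
      rw [Real.norm_eq_abs, abs_le]
      constructor <;> linarith [F₀.toFun_nonneg t, F₀.toFun_le_one t, F.toFun_nonneg t,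
        F.toFun_le_one t]
  rw [← IFun_sub_IFun, one_mul, Real.norm_eq_abs] at hbound
  linarith [neg_abs_le (IFun F₀ F θ - IFun F₀ F a)]

lemma IsPrior.toFun_pos (hF₀ : IsPrior F₀) {t : ℝ} (ht : θL < t) : 0 < F₀.toFun t := by
  have h := hF₀.1 (t - θL) (sub_pos.2 ht)
  rwa [add_sub_cancel, F₀.eq_zero (θL - (t - θL)) (by linarith), sub_zero] at h

lemma IsPrior.toFun_lt_one (hF₀ : IsPrior F₀) {t : ℝ} (ht : t < θH) : F₀.toFun t < 1 := by
  have h := hF₀.2 (θH - t) (sub_pos.2 ht)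
  rwa [sub_sub_cancel, F₀.eq_one (θH + (θH - t)) (by linarith), sub_pos] at h

lemma IsPrior.mean_mem_Ioo (hF₀ : IsPrior F₀) (hθ : θL < θH) : F₀.mean ∈ Ioo θL θH := by
  have hL := F₀.excess_pos le_rfl hθ fun t ht => hF₀.toFun_lt_one ht.2
  have hH := F₀.shortfall_pos hθ fun t ht => hF₀.toFun_pos ht.1
  rw [F₀.excess_eq_shortfall_add, F₀.shortfall_left] at hL
  rw [F₀.shortfall_eq_sub_mean le_rfl] at hH
  constructor <;> linarith

lemma IFun_thetaLF_pos (hF₀ : IsPrior F₀) (hL : θL < thetaLF F) : 0 < IFun F₀ F (thetaLF F) :=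
  intervalIntegral.intervalIntegral_pos_of_pos_on
    ((F₀.intervalIntegrable _ _).sub (F.intervalIntegrable _ _))
    (fun t ht => by rw [F.toFun_eq_zero_of_lt_thetaLF ht.2, sub_zero]; exact hF₀.toFun_pos ht.1) hL

lemma IsSignal.IFun_thetaHF_pos (hsig : IsSignal F₀ F) (hF₀ : IsPrior F₀) (hH : thetaHF F < θH) :
    0 < IFun F₀ F (thetaHF F) := by
  have hneg : 0 < ∫ t in thetaHF F..θH, (F.toFun t - F₀.toFun t) :=
    intervalIntegral.intervalIntegral_pos_of_pos_on
      ((F.intervalIntegrable _ _).sub (F₀.intervalIntegrable _ _))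
      (fun t ht => by
        rw [F.toFun_eq_one_of_thetaHF_lt ht.1, sub_pos]
        exact hF₀.toFun_lt_one ht.2) hH
  simp only [← neg_sub (F₀.toFun _), intervalIntegral.integral_neg] at hneg
  linarith [IFun_sub_IFun F₀ F (thetaHF F) θH, hsig.2]

section Cost

variable {θ₀ : ℝ} {c c' c'' : ℝ → ℝ}

lemma CostAssumptions.monotoneOn_deriv (hc : CostAssumptions θL θH θ₀ c c' c'') :
    MonotoneOn c' (Ioo θL θH) :=
  (strictMonoOn_of_deriv_pos (convex_Ioo θL θH)
    (fun x hx => (hc.hasDeriv2 x hx).continuousAt.continuousWithinAt)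
    fun x hx => by
      rw [interior_Ioo] at hx
      rw [(hc.hasDeriv2 x hx).deriv]
      exact hc.pos2 x hx).monotoneOn

lemma CostAssumptions.convexOn (hc : CostAssumptions θL θH θ₀ c c' c'') :
    ConvexOn ℝ (Icc θL θH) c := by
  refine MonotoneOn.convexOn_of_deriv (convex_Icc θL θH) hc.cont ?_ ?_ <;> rw [interior_Icc]
  · exact fun x hx => (hc.hasDeriv x hx).differentiableAt.differentiableWithinAt
  · exact hc.monotoneOn_deriv.congr fun x hx => ((hc.hasDeriv x hx).deriv).symm

lemma CostAssumptions.sub_le_deriv_mul (hc : CostAssumptions θL θH θ₀ c c' c'') {s p : ℝ}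
    (hs : θL ≤ s) (hsp : s ≤ p) (hp : p ∈ Ioo θL θH) : c p - c s ≤ c' p * (p - s) := by
  rcases hsp.eq_or_lt with rfl | hlt
  · simp
  have h := hc.convexOn.slope_le_of_hasDerivAt ⟨hs, hsp.trans hp.2.le⟩ (Ioo_subset_Icc_self hp) hlt
    (hc.hasDeriv p hp)
  rwa [slope_def_field, div_le_iff₀ (sub_pos.2 hlt)] at h

lemma CostAssumptions.deriv_mul_le_sub (hc : CostAssumptions θL θH θ₀ c c' c'') {y s : ℝ}
    (hy : y ∈ Ioo θL θH) (hys : y ≤ s) (hs : s ≤ θH) : c' y * (s - y) ≤ c s - c y := by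
  rcases hys.eq_or_lt with rfl | hlt
  · simp
  have h := hc.convexOn.le_slope_of_hasDerivAt (Ioo_subset_Icc_self hy) ⟨hy.1.le.trans hys, hs⟩ hlt
    (hc.hasDeriv y hy)
  rwa [slope_def_field, le_div_iff₀ (sub_pos.2 hlt)] at h

end Cost

section Allocation

variable {qbar u : ℝ} {Q : ℝ → ℝ}

lemma IsAllocation.intervalIntegrable (hQ : IsAllocation θL θH qbar Q) {a b : ℝ}
    (ha : a ∈ Icc θL θH) (hb : b ∈ Icc θL θH) : IntervalIntegrable Q volume a b :=
  (hQ.1.mono (uIcc_subset_Icc ha hb)).intervalIntegrable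

lemma IsAllocation.Vfun_sub (hQ : IsAllocation θL θH qbar Q) {a b : ℝ}
    (ha : a ∈ Icc θL θH) (hb : b ∈ Icc θL θH) :
    Vfun θL Q u b - Vfun θL Q u a = ∫ t in a..b, Q t := by
  have hL : θL ∈ Icc θL θH := ⟨le_rfl, ha.1.trans ha.2⟩
  rw [Vfun, Vfun, add_sub_add_left_eq_sub, intervalIntegral.integral_interval_sub_left
    (hQ.intervalIntegrable hL hb) (hQ.intervalIntegrable hL ha)]

lemma IsAllocation.continuousOn_Vfun (hQ : IsAllocation θL θH qbar Q) (hθ : θL ≤ θH) :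
    ContinuousOn (Vfun θL Q u) (Icc θL θH) := by
  have h := intervalIntegral.continuousOn_primitive_interval'
    (hQ.intervalIntegrable (left_mem_Icc.2 hθ) (right_mem_Icc.2 hθ)) left_mem_uIcc
  rw [uIcc_of_le hθ] at h
  exact continuousOn_const.add h

end Allocation

section IncentiveCompatibility

variable {θ₀ qbar u : ℝ} {c c' c'' Q : ℝ → ℝ}

lemma payoff_sub_ge_left (hQ : IsAllocation θL θH qbar Q)
    (hc : CostAssumptions θL θH θ₀ c c' c'') {s p : ℝ} (hs : θL ≤ s) (hsp : s ≤ p)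
    (hp : p ∈ Ioo θL θH) :
    -c' p * (p - s) ≤ (Vfun θL Q u p - c p) - (Vfun θL Q u s - c s) := by
  have hV : 0 ≤ Vfun θL Q u p - Vfun θL Q u s := by
    rw [hQ.Vfun_sub ⟨hs, hsp.trans hp.2.le⟩ (Ioo_subset_Icc_self hp)]
    exact intervalIntegral.integral_nonneg hsp fun t ht =>
      (hQ.2 t ⟨hs.trans ht.1, ht.2.trans hp.2.le⟩).1
  linarith [hc.sub_le_deriv_mul hs hsp hp]

lemma payoff_sub_ge_right (hQ : IsAllocation θL θH qbar Q)
    (hc : CostAssumptions θL θH θ₀ c c' c'') {y s : ℝ} (hy : y ∈ Ioo θL θH) (hys : y ≤ s)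
    (hs : s ≤ θH) :
    (c' y - qbar) * (s - y) ≤ (Vfun θL Q u y - c y) - (Vfun θL Q u s - c s) := by
  have hyI : y ∈ Icc θL θH := Ioo_subset_Icc_self hy
  have hsI : s ∈ Icc θL θH := ⟨hy.1.le.trans hys, hs⟩
  have hV : Vfun θL Q u s - Vfun θL Q u y ≤ qbar * (s - y) := by
    rw [hQ.Vfun_sub hyI hsI]
    simpa [mul_comm] using intervalIntegral.integral_mono_on hys (hQ.intervalIntegrable hyI hsI)
      intervalIntegrable_const fun t ht => (hQ.2 t ⟨hy.1.le.trans ht.1, ht.2.trans hs⟩).2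
  linarith [hc.deriv_mul_le_sub hy hys hs]

lemma payoff_truncate_sub_ge (hQ : IsAllocation θL θH qbar Q)
    (hc : CostAssumptions θL θH θ₀ c c' c'') {p y s : ℝ} (hp : θL < p) (hpy : p ≤ y) (hy : y < θH)
    (hs : s ∈ Icc θL θH) :
    -c' p * max (p - s) 0 + (c' y - qbar) * max (s - y) 0 ≤
      (Vfun θL Q u (max p (min s y)) - c (max p (min s y))) - (Vfun θL Q u s - c s) := by
  rcases le_total s p with hsp | hps
  · rw [max_eq_left (sub_nonneg.2 hsp), max_eq_right (by linarith : s - y ≤ 0),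
      max_eq_left ((min_le_left _ _).trans hsp)]
    simpa using payoff_sub_ge_left hQ hc hs.1 hsp ⟨hp, by linarith⟩
  rcases le_total s y with hsy | hys
  · rw [max_eq_right (sub_nonpos.2 hps), max_eq_right (sub_nonpos.2 hsy), min_eq_left hsy,
      max_eq_right hps]
    simp
  · rw [max_eq_right (by linarith : p - s ≤ 0), max_eq_left (sub_nonneg.2 hys), min_eq_right hys,
      max_eq_right hpy]
    simpa using payoff_sub_ge_right hQ hc ⟨by linarith, hy⟩ hys hs.2

lemma IsIC.deriv_sub_deriv_le (hc : CostAssumptions θL θH θ₀ c c' c'')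
    (hQ : IsAllocation θL θH qbar Q) (hIC : IsIC F₀ c Q u F) {p y : ℝ} (hp : θL < p) (hpy : p < y)
    (hy : y < θH) (hbal : F.shortfall p = F.excess y) (hpos : 0 < F.shortfall p) :
    c' y - c' p ≤ qbar := by
  set φ : ℝ → ℝ := fun θ => Vfun θL Q u θ - c θ
  have hφ : ContinuousOn φ (Icc θL θH) := (hQ.continuousOn_Vfun F.left_le_right).sub hc.cont
  have hφclamp : ContinuousOn (fun s => φ (max p (min s y))) (Icc θL θH) :=
    hφ.comp (by fun_prop) fun s _ => ⟨hp.le.trans (le_max_left _ _),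
      max_le (hpy.le.trans hy.le) ((min_le_right _ _).trans hy.le)⟩
  have hdev := hIC.2 _ (hIC.1.truncate hp.le hpy.le hy.le hbal)
  rw [CDF.integ_truncate _ _ _ _ hφ] at hdev
  have hgain : (c' y - c' p - qbar) * F.shortfall p ≤
      ∫ s, φ (max p (min s y)) ∂F.meas - F.integ φ :=
    calc (c' y - c' p - qbar) * F.shortfall p
        = ∫ s, (-c' p * max (p - s) 0 + (c' y - qbar) * max (s - y) 0) ∂F.meas := by
          rw [integral_add ((F.integrable_of_continuous (by fun_prop)).const_mul _)
            ((F.integrable_of_continuous (by fun_prop)).const_mul _), integral_const_mul,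
            integral_const_mul]
          change _ = -c' p * F.shortfall p + (c' y - qbar) * F.excess y
          rw [← hbal]
          ring
      _ ≤ ∫ s, (φ (max p (min s y)) - φ s) ∂F.meas :=
          integral_mono_ae (((F.integrable_of_continuous (by fun_prop)).const_mul _).add
            ((F.integrable_of_continuous (by fun_prop)).const_mul _))
            ((F.integrable_of_continuousOn hφclamp).sub (F.integrable_of_continuousOn hφ))
            (F.ae_mem_Icc.mono fun s hs => payoff_truncate_sub_ge hQ hc hp hpy.le hy hs)
      _ = _ := integral_sub (F.integrable_of_continuousOn hφclamp)
          (F.integrable_of_continuousOn hφ)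
  linarith [nonpos_of_mul_nonpos_left (hgain.trans (sub_nonpos.2 hdev)) hpos]

lemma IsIC.left_lt_thetaLF (hθ : θL < θH) (hF₀ : IsPrior F₀)
    (hc : CostAssumptions θL θH θ₀ c c' c'') (hQ : IsAllocation θL θH qbar Q)
    (hIC : IsIC F₀ c Q u F) : θL < thetaLF F := by
  by_contra! hLF
  obtain ⟨hmL, hmH⟩ : F.mean ∈ Ioo θL θH := hIC.1.mean_eq ▸ hF₀.mean_mem_Ioo hθ
  set r := (θL + F.mean) / 2 with hr_def
  have hr : r ∈ Ioo θL θH := ⟨by linarith, by linarith⟩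
  obtain ⟨p, hpc, hpL, hpr⟩ : ∃ p, c' p < c' r - qbar - 1 ∧ p ∈ Ioo θL r :=
    ((hc.slopeBot.eventually (eventually_lt_atBot _)).and (Ioo_mem_nhdsGT hr.1)).exists
  have hpos : 0 < F.shortfall p :=
    F.shortfall_pos hpL fun t ht => F.toFun_pos_of_thetaLF_lt (hLF.trans_lt ht.1)
  obtain ⟨y, ⟨hpy, hyH⟩, hbal, hmy⟩ := F.exists_excess_eq_shortfall hpL.le (by linarith) hpos
  have hry : r ≤ y := by linarith [F.shortfall_le hpL.le]
  have hcr : c' r ≤ c' y := hc.monotoneOn_deriv hr ⟨hr.1.trans_le hry, hyH⟩ hry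
  linarith [hIC.deriv_sub_deriv_le hc hQ hpL hpy hyH hbal.symm hpos]

lemma IsIC.thetaHF_lt_right (hθ : θL < θH) (hF₀ : IsPrior F₀)
    (hc : CostAssumptions θL θH θ₀ c c' c'') (hQ : IsAllocation θL θH qbar Q)
    (hIC : IsIC F₀ c Q u F) : thetaHF F < θH := by
  by_contra! hHF
  obtain ⟨hmL, hmH⟩ : F.mean ∈ Ioo θL θH := hIC.1.mean_eq ▸ hF₀.mean_mem_Ioo hθ
  set r := (F.mean + θH) / 2 with hr_def
  have hr : r ∈ Ioo θL θH := ⟨by linarith, by linarith⟩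
  obtain ⟨y, hyc, hry, hyH⟩ : ∃ y, c' r + qbar + 1 < c' y ∧ y ∈ Ioo r θH :=
    ((hc.slopeTop.eventually (eventually_gt_atTop _)).and (Ioo_mem_nhdsLT hr.2)).exists
  have hpos : 0 < F.excess y := F.excess_pos (hr.1.trans hry).le hyH fun t ht =>
    F.toFun_lt_one_of_lt_thetaHF (ht.2.trans_le hHF)
  obtain ⟨p, ⟨hpL, hpy⟩, hbal, hpm⟩ := F.exists_shortfall_eq_excess (by linarith) hpos
  have hpr : p ≤ r := by linarith [F.excess_le hyH.le]
  have hcp : c' p ≤ c' r := hc.monotoneOn_deriv ⟨hpL, hpr.trans_lt hr.2⟩ hr hpr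
  linarith [hIC.deriv_sub_deriv_le hc hQ hpL hpy hyH hbal (hbal ▸ hpos)]

end IncentiveCompatibility

end

theorem statement5_general {θL θH : ℝ} (hθ : θL < θH)
    (F₀ : CDF θL θH) (hF₀ : IsPrior F₀)
    (c c' c'' : ℝ → ℝ) (hc : CostAssumptions θL θH F₀.mean c c' c'')
    (qbar : ℝ)
    (Q : ℝ → ℝ) (hQ : IsAllocation θL θH qbar Q)
    (u : ℝ)
    (F : CDF θL θH) (hIC : IsIC F₀ c Q u F) :
    θL < thetaLF F ∧ thetaHF F < θH ∧
    ∃ ε > 0, ∀ θ ∈ Set.Icc θL θH,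
      (|θ - thetaLF F| < ε ∨ |θ - thetaHF F| < ε) → 0 < IFun F₀ F θ := by
  have hL := hIC.left_lt_thetaLF hθ hF₀ hc hQ
  have hH := hIC.thetaHF_lt_right hθ hF₀ hc hQ
  have hIL := IFun_thetaLF_pos (F := F) hF₀ hL
  have hIH := hIC.1.IFun_thetaHF_pos hF₀ hH
  refine ⟨hL, hH, min _ _, lt_min hIL hIH, fun θ _ hθ => ?_⟩
  rcases hθ with hθ | hθ
  · exact IFun_pos_of_abs_sub_lt F₀ F (hθ.trans_le (min_le_left _ _))
  · exact IFun_pos_of_abs_sub_lt F₀ F (hθ.trans_le (min_le_right _ _))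

theorem statement5 {θL θH : ℝ} (hθL : 0 ≤ θL) (hθ : θL < θH)
    (F₀ : CDF θL θH) (hF₀ : IsPrior F₀)
    (c c' c'' : ℝ → ℝ) (hc : CostAssumptions θL θH F₀.mean c c' c'')
    (qbar : ℝ) (hqbar : 0 < qbar)
    (Q : ℝ → ℝ) (hQ : IsAllocation θL θH qbar Q)
    (u : ℝ) (hu : 0 ≤ u)
    (F : CDF θL θH) (hIC : IsIC F₀ c Q u F) :
    θL < thetaLF F ∧ thetaHF F < θH ∧
    ∃ ε > 0, ∀ θ ∈ Set.Icc θL θH,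
      (|θ - thetaLF F| < ε ∨ |θ - thetaHF F| < ε) → 0 < IFun F₀ F θ :=
  statement5_general hθ F₀ hF₀ c c' c'' hc qbar Q hQ u F hIC
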